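/- If each agent i truthfully reports a piecewise-constant density and agent i instead reports any piecewise-constant f_i' whose set of discontinuity points contains the discontinuity points of the true f_i, then in the exact-division algorithm (Algorithm 2 with shifted orders), agent i still receives a piece worth exactly (1/n) of their true total value; i.e., such a misreport yields no strict gain. -/

import Mathlib

/-!
On each cell `[x j, x (j + 1))` the true density is constant off the endpoints, so every one of
the `n` equal parts of the cell carries exactly `1/n` of the cell's value, whichever part the
shifted order assigns to agent `i`. The parts of different cells are disjoint, so summing over the cells gives
`1/n` of the value of `[0, 1]`.
-/

open MeasureTheory Set

/-- The value of set `X` under value density function `f`. -/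
noncomputable def val (f : ℝ → ℝ) (X : Set ℝ) : ℝ := ∫ t in X, f t

def equalPart (n k : ℕ) (p q : ℝ) : Set ℝ :=
  Ico (p + (k : ℝ) / n * (q - p)) (p + ((k : ℝ) + 1) / n * (q - p))

lemma pairwiseDisjoint_range_of_subset_Ico {β : Type*} [Preorder β] {x : ℕ → β} {m : ℕ}
    (hx : ∀ j < m, x j < x (j + 1)) {s : ℕ → Set β}
    (hs : ∀ j < m, s j ⊆ Ico (x j) (x (j + 1))) :
    (Finset.range m : Set ℕ).PairwiseDisjoint s := by
  have hmono : MonotoneOn x (Iic m) := (strictMonoOn_Iic_of_lt_succ hx).monotoneOn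
  have disjoint_of_lt : ∀ p q, p < q → q < m → Disjoint (s p) (s q) := fun p q hpq hqm =>
    disjoint_left.mpr fun t htp htq =>
      ((hs p (hpq.trans hqm) htp).2.trans_le
        (hmono (mem_Iic.mpr (by omega)) (mem_Iic.mpr hqm.le) hpq)).not_ge (hs q hqm htq).1
  intro p hp q hq hpq
  simp only [Finset.coe_range, mem_Iio] at hp hq
  rcases hpq.lt_or_gt with h | h
  · exact disjoint_of_lt p q h hq
  · exact (disjoint_of_lt q p h hp).symm

lemma exists_eqOn_Ioo_of_forall_eq {f : ℝ → ℝ} {p q : ℝ}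
    (h : ∀ y ∈ Ioo p q, ∀ z ∈ Ioo p q, f y = f z) : ∃ c, EqOn f (fun _ => c) (Ioo p q) :=
  ⟨f ((p + q) / 2), fun t ht => h t ht _ ⟨by linarith [ht.1, ht.2], by linarith [ht.1, ht.2]⟩⟩

section EqOnIoo

variable {f : ℝ → ℝ} {p q c : ℝ}

lemma integrableOn_Icc_of_eqOn_Ioo (h : EqOn f (fun _ => c) (Ioo p q)) :
    IntegrableOn f (Icc p q) :=
  (integrableOn_Icc_iff_integrableOn_Ioo).mpr <|
    (integrableOn_const (by simp)).congr_fun h.symm measurableSet_Ioo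

lemma setIntegral_Ico_of_eqOn_Ioo (hpq : p ≤ q) (h : EqOn f (fun _ => c) (Ioo p q)) :
    ∫ t in Ico p q, f t = (q - p) * c := by
  rw [integral_Ico_eq_integral_Ioo, setIntegral_congr_fun measurableSet_Ioo h,
    setIntegral_const, measureReal_def, Real.volume_Ioo, ENNReal.toReal_ofReal (by linarith),
    smul_eq_mul]

lemma intervalIntegral_of_eqOn_Ioo (hpq : p ≤ q) (h : EqOn f (fun _ => c) (Ioo p q)) :
    ∫ t in p..q, f t = (q - p) * c := by
  rw [intervalIntegral.integral_of_le hpq, integral_Ioc_eq_integral_Ioo,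
    ← integral_Ico_eq_integral_Ioo, setIntegral_Ico_of_eqOn_Ioo hpq h]

end EqOnIoo

section EqualPart

variable {n k : ℕ} {p q : ℝ}

lemma equalPart_bounds (hk : k < n) (hpq : p ≤ q) :
    p ≤ p + (k : ℝ) / n * (q - p) ∧ p + ((k : ℝ) + 1) / n * (q - p) ≤ q := by
  have hk' : (k : ℝ) + 1 ≤ n := by exact_mod_cast hk
  have hn : (0 : ℝ) < n := by exact_mod_cast hk.pos
  constructor
  · have : 0 ≤ (k : ℝ) / n * (q - p) := by have := sub_nonneg.mpr hpq; positivity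
    linarith
  · have : ((k : ℝ) + 1) / n * (q - p) ≤ 1 * (q - p) :=
      mul_le_mul_of_nonneg_right ((div_le_one hn).mpr hk') (sub_nonneg.mpr hpq)
    linarith

lemma equalPart_subset_Ico (hk : k < n) (hpq : p ≤ q) : equalPart n k p q ⊆ Ico p q :=
  Ico_subset_Ico (equalPart_bounds hk hpq).1 (equalPart_bounds hk hpq).2

lemma integral_equalPart {f : ℝ → ℝ} (hk : k < n) (hpq : p ≤ q)
    (hf : ∀ y ∈ Ioo p q, ∀ z ∈ Ioo p q, f y = f z) :
    ∫ t in equalPart n k p q, f t = (∫ t in p..q, f t) / n := by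
  obtain ⟨c, hc⟩ := exists_eqOn_Ioo_of_forall_eq hf
  obtain ⟨hp, hq⟩ := equalPart_bounds hk hpq
  have hlen : p + ((k : ℝ) + 1) / n * (q - p) - (p + (k : ℝ) / n * (q - p)) = (q - p) / n := by
    ring
  have hn : (0 : ℝ) < n := by exact_mod_cast hk.pos
  rw [equalPart, setIntegral_Ico_of_eqOn_Ioo (by linarith [div_nonneg (sub_nonneg.2 hpq) hn.le])
    (hc.mono (Ioo_subset_Ioo hp hq)), hlen, intervalIntegral_of_eqOn_Ioo hpq hc, div_mul_eq_mul_div]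

end EqualPart

theorem shifted_exact_division_no_gain
    (n m : ℕ) (hn : 0 < n)
    (x : ℕ → ℝ) (hx0 : x 0 = 0) (hxm : x m = 1)
    (hmono : ∀ j < m, x j < x (j + 1))
    (i : ℕ)
    (fi : ℝ → ℝ)
    -- the true density is constant on each open cell of the refined partition
    (hconst : ∀ j < m, ∀ y ∈ Set.Ioo (x j) (x (j + 1)), ∀ z ∈ Set.Ioo (x j) (x (j + 1)),
      fi y = fi z)
    (A : Set ℝ)
    (hA : A = ⋃ j ∈ Finset.range m,
      Set.Ico (x j + (((i + j) % n : ℕ) : ℝ) / n * (x (j + 1) - x j))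
              (x j + ((((i + j) % n : ℕ) : ℝ) + 1) / n * (x (j + 1) - x j))) :
    val fi A = (1 / n) * val fi (Set.Icc 0 1) := by
  set piece := fun j => equalPart n ((i + j) % n) (x j) (x (j + 1))
  have hpiece : ∀ j < m, piece j ⊆ Ico (x j) (x (j + 1)) := fun j hj =>
    equalPart_subset_Ico (Nat.mod_lt _ hn) (hmono j hj).le
  have hint : ∀ j < m, IntegrableOn fi (Icc (x j) (x (j + 1))) := fun j hj =>
    integrableOn_Icc_of_eqOn_Ioo (exists_eqOn_Ioo_of_forall_eq (hconst j hj)).choose_spec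
  calc val fi A = ∑ j ∈ Finset.range m, ∫ t in piece j, fi t := by
        rw [val, hA]
        refine integral_biUnion_finset _ (fun _ _ => measurableSet_Ico)
          (pairwiseDisjoint_range_of_subset_Ico hmono hpiece) fun j hj =>
            (hint j (Finset.mem_range.mp hj)).mono_set
              ((hpiece j (Finset.mem_range.mp hj)).trans Ico_subset_Icc_self)
    _ = ∑ j ∈ Finset.range m, (∫ t in x j..x (j + 1), fi t) / n :=
        Finset.sum_congr rfl fun j hj =>
          integral_equalPart (Nat.mod_lt _ hn) (hmono j (Finset.mem_range.mp hj)).le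
            (hconst j (Finset.mem_range.mp hj))
    _ = (1 / n) * val fi (Icc 0 1) := by
        rw [← Finset.sum_div, intervalIntegral.sum_integral_adjacent_intervals fun j hj =>
            (intervalIntegrable_iff_integrableOn_Icc_of_le (hmono j hj).le).mpr (hint j hj),
          hx0, hxm, val, integral_Icc_eq_integral_Ioc,
          intervalIntegral.integral_of_le zero_le_one, one_div_mul_eq_div]
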